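/- arXiv:2604.08154 — 2 statements merged into one kernel-verified Lean document; each statement's English description precedes it below -/
import Mathlib

section
/- Let ξ, ζ : ℤ → {0,1} be configurations with ξ(z) ≤ ζ(z) for all z ∈ ℤ, and let x ∈ ℤ be such that ξ(x) = 1. Then ∑_{y=x−2}^{x+2} (1 − ζ(y)) · max(Γ_ζ(x,y) − Γ_ξ(x,y), 0) ≤ ∑_{y=x−2}^{x+2} ζ(y) (1 − ξ(y)) Γ_ξ(x,y). (Since Γ_η(x,y) = 0 whenever |x−y| > 2, these finite sums contain all nonzero terms of the corresponding sums over y ∈ ℤ; this is the second of the two Gobron–Saada necessary and sufficient conditions for attractiveness, verified for the directed exclusion process.) -/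
/-- The DEP jump rate `Γ_η(x,y)` for a configuration `η : ℤ → {0,1} ⊆ ℤ`. -/
def depRate (η : ℤ → ℤ) (x y : ℤ) : ℤ :=
  if y = x + 1 ∨ y = x - 1 then 1
  else if y = x + 2 then η (x + 1)
  else if y = x - 2 then 1 - η (x - 1)
  else 0

lemma depRate_p1 (η : ℤ → ℤ) (x : ℤ) : depRate η x (x + 1) = 1 := by
  simp [depRate]

lemma depRate_m1 (η : ℤ → ℤ) (x : ℤ) : depRate η x (x - 1) = 1 := by
  simp [depRate]

lemma depRate_p2 (η : ℤ → ℤ) (x : ℤ) : depRate η x (x + 2) = η (x + 1) := by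
  unfold depRate
  rw [if_neg (by omega), if_pos rfl]

lemma depRate_m2 (η : ℤ → ℤ) (x : ℤ) : depRate η x (x - 2) = 1 - η (x - 1) := by
  unfold depRate
  rw [if_neg (by omega), if_neg (by omega), if_pos rfl]

lemma depRate_self (η : ℤ → ℤ) (x : ℤ) : depRate η x x = 0 := by
  unfold depRate
  rw [if_neg (by omega), if_neg (by omega), if_neg (by omega)]

lemma sum_Icc_five (f : ℤ → ℤ) (x : ℤ) :
    ∑ y ∈ Finset.Icc (x - 2) (x + 2), f y
      = f (x - 2) + f (x - 1) + f x + f (x + 1) + f (x + 2) := by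
  have h : Finset.Icc (x - 2) (x + 2) = {x - 2, x - 1, x, x + 1, x + 2} := by
    ext y; simp [Finset.mem_Icc]; omega
  rw [h]
  rw [Finset.sum_insert (by simp only [Finset.mem_insert, Finset.mem_singleton]; omega), Finset.sum_insert (by simp only [Finset.mem_insert, Finset.mem_singleton]; omega),
      Finset.sum_insert (by simp only [Finset.mem_insert, Finset.mem_singleton]; omega), Finset.sum_insert (by simp only [Finset.mem_insert, Finset.mem_singleton]; omega),
      Finset.sum_singleton]
  ring

/-- Second Gobron–Saada attractiveness condition, verified for DEP. -/
theorem dep_attractiveness_condition_two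
    (ξ ζ : ℤ → ℤ)
    (hξ : ∀ z, ξ z = 0 ∨ ξ z = 1)
    (hζ : ∀ z, ζ z = 0 ∨ ζ z = 1)
    (hle : ∀ z, ξ z ≤ ζ z)
    (x : ℤ) (hx : ξ x = 1) :
    ∑ y ∈ Finset.Icc (x - 2) (x + 2), (1 - ζ y) * max (depRate ζ x y - depRate ξ x y) 0
      ≤ ∑ y ∈ Finset.Icc (x - 2) (x + 2), ζ y * (1 - ξ y) * depRate ξ x y := by
  rw [sum_Icc_five, sum_Icc_five]
  simp only [depRate_p1, depRate_m1, depRate_p2, depRate_m2, depRate_self]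
  have h1 := hle (x - 1); have h2 := hle (x + 1)
  have h3 := hle (x - 2); have h4 := hle (x + 2)
  have hmax1 : max ((1 - ζ (x - 1)) - (1 - ξ (x - 1))) 0 = 0 := by
    rw [max_eq_right]; omega
  have hmax2 : max (ζ (x + 1) - ξ (x + 1)) 0 = ζ (x + 1) - ξ (x + 1) := by
    rw [max_eq_left]; omega
  simp only [sub_self, max_self, mul_zero, hmax1, hmax2]
  rcases hξ (x - 1) with e1 | e1 <;> rcases hξ (x + 1) with e2 | e2 <;>
    rcases hζ (x - 1) with f1 | f1 <;> rcases hζ (x + 1) with f2 | f2 <;>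
    rcases hζ (x - 2) with f3 | f3 <;> rcases hζ (x + 2) with f4 | f4 <;>
    rcases hξ (x - 2) with e3 | e3 <;> rcases hξ (x + 2) with e4 | e4 <;>
    rw [e1, e2, f1, f2, f3, f4, e3, e4] <;> norm_num
end

section
/- The mixed rarefaction–shock (contact-discontinuity) profile is a weak solution: let G(u) = 2u(1−u)(2u−1), H(u) = 1 − 12(u − 1/2)², let ρ ∈ [0, 1/2] and λ ∈ (3/4 − ρ/2, 1], and set ρ* := 3/4 − ρ/2 (so ρ* ∈ (1/2, 3/4] and λ > ρ*). Define u : ℝ × [0,∞) → ℝ by: u(x,0) = u₀(x), where u₀(x) = λ if x < 0 and u₀(x) = ρ if x ≥ 0; and for t > 0, u(x,t) = λ if x ≤ H(λ)·t, u(x,t) = 1/2 + √((1 − x/t)/12) if H(λ)·t < x ≤ H(ρ*)·t, and u(x,t) = ρ if x > H(ρ*)·t. Then u is a weak solution of ∂_t u + ∂_x G(u) = 0 with initial datum u₀: for every continuously differentiable φ : ℝ × ℝ → ℝ with compact support, ∫_0^∞ ∫_ℝ ( u(x,t) ∂_t φ(x,t) + G(u(x,t)) ∂_x φ(x,t) )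 dx dt + ∫_ℝ u₀(x) φ(x,0) dx = 0. -/
open MeasureTheory

/-- The DEP macroscopic flux `G(u) = 2u(1-u)(2u-1)`. -/
def depG (u : ℝ) : ℝ := 2 * u * (1 - u) * (2 * u - 1)

/-- The characteristic speed `H(u) = G'(u) = 1 - 12(u - 1/2)²`. -/
noncomputable def depH (u : ℝ) : ℝ := 1 - 12 * (u - 1 / 2) ^ 2

/-!
For `t > 0` the profile is self-similar and the weak form splits along the rays `x = s₁ t` and
`x = s₂ t`, where `s₁ = H(λ)` and `s₂ = H(ρ*)`. On each constant half-plane the shear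
`x = y + s t` and an integration by parts in `t` leave the initial-data term plus the ray term
`(G(c) - s c) ∫ φ(s t, t) dt`. In the fan `x = ξ t` the profile is `V = H⁻¹(ξ)`, so
`d/dξ (G(V) - ξ V) = (H(V) - ξ) V' - V = -V`, and the contribution of the fan collapses to the
ray terms `G(V) - ξ V` at `ξ = s₁, s₂`. These cancel against the half-plane terms: at `s₁`
because `V(s₁) = λ`, and at `s₂` by the Rankine–Hugoniot identity
`G(ρ*) - G(ρ) = H(ρ*) (ρ* - ρ)`.
-/

open Set Function

theorem HasCompactSupport.comp_of_leftInverse {X Y M : Type*} [TopologicalSpace X]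
    [TopologicalSpace Y] [T2Space Y] [Zero M] {f : Y → M} (hf : HasCompactSupport f) {c : X → Y}
    {p : Y → X} (hpc : LeftInverse p c) (hc : Continuous c) (hp : Continuous p) :
    HasCompactSupport (f ∘ c) :=
  hf.comp_isClosedEmbedding (hpc.isClosedEmbedding hp hc)

section ContinuousCompactSupport

variable {g : ℝ × ℝ → ℝ}

theorem HasCompactSupport.comp_slice (hgs : HasCompactSupport g) (t : ℝ) :
    HasCompactSupport fun x => g (x, t) :=
  hgs.comp_of_leftInverse (p := Prod.fst) (fun _ => rfl) (by fun_prop) continuous_fst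

theorem HasCompactSupport.comp_line (hgs : HasCompactSupport g) (y s : ℝ) :
    HasCompactSupport fun τ => g (y + s * τ, τ) :=
  hgs.comp_of_leftInverse (p := Prod.snd) (fun _ => rfl) (by fun_prop) continuous_snd

theorem Continuous.integrable_slice (hg : Continuous g) (hgs : HasCompactSupport g) (t : ℝ) :
    Integrable fun x => g (x, t) :=
  (hg.comp (by fun_prop)).integrable_of_hasCompactSupport (hgs.comp_slice t)

theorem Continuous.integrable_line (hg : Continuous g) (hgs : HasCompactSupport g) (y s : ℝ) :
    Integrable fun τ => g (y + s * τ, τ) :=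
  (hg.comp (by fun_prop)).integrable_of_hasCompactSupport (hgs.comp_line y s)

theorem Continuous.integrable_prod_restrict (hg : Continuous g) (hgs : HasCompactSupport g)
    (S T : Set ℝ) : Integrable g ((volume.restrict S).prod (volume.restrict T)) := by
  rw [Measure.prod_restrict, ← Measure.volume_eq_prod]
  exact (hg.integrable_of_hasCompactSupport hgs).restrict

theorem Continuous.integrable_prod_restrict_of_eq_zero (hg : Continuous g)
    {K : Set (ℝ × ℝ)} (hK : IsCompact K) {S T : Set ℝ} (hS : MeasurableSet S)
    (hT : MeasurableSet T) (hgK : ∀ q ∈ S ×ˢ T, q ∉ K → g q = 0) :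
    Integrable g ((volume.restrict S).prod (volume.restrict T)) := by
  rw [Measure.prod_restrict, ← Measure.volume_eq_prod]
  exact (hg.continuousOn.integrableOn_compact hK).of_forall_sdiff_eq_zero (hS.prod hT)
    fun q hq => hgK q hq.1 hq.2

theorem Continuous.integrable_prod_restrict_comp_shear (hg : Continuous g)
    (hgs : HasCompactSupport g) (s : ℝ) (S T : Set ℝ) :
    Integrable (fun q : ℝ × ℝ => g (q.2 + s * q.1, q.1))
      ((volume.restrict S).prod (volume.restrict T)) :=
  (hg.comp (by fun_prop)).integrable_prod_restrict
    (hgs.comp_of_leftInverse (p := fun p => (p.2, p.1 - s * p.2)) (fun q => by simp)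
      (by fun_prop) (by fun_prop)) S T

end ContinuousCompactSupport

theorem setIntegral_Iic_eq_comp_add (g : ℝ → ℝ) (c : ℝ) :
    ∫ x in Iic c, g x = ∫ y in Iic 0, g (y + c) := by
  rw [← (measurePreserving_add_right volume c).setIntegral_preimage_emb
    (measurableEmbedding_addRight c), preimage_add_const_Iic, sub_self]

theorem setIntegral_Ioi_eq_comp_add (g : ℝ → ℝ) (c : ℝ) :
    ∫ x in Ioi c, g x = ∫ y in Ioi 0, g (y + c) := by
  rw [← (measurePreserving_add_right volume c).setIntegral_preimage_emb
    (measurableEmbedding_addRight c), preimage_add_const_Ioi, sub_self]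

theorem integral_eq_Iic_add_intervalIntegral_add_Ioi {f g₁ g₂ g₃ : ℝ → ℝ} {a b : ℝ}
    (hab : a ≤ b) (h₁ : EqOn f g₁ (Iic a)) (h₂ : EqOn f g₂ (Ioc a b)) (h₃ : EqOn f g₃ (Ioi b))
    (i₁ : IntegrableOn g₁ (Iic a)) (i₂ : IntegrableOn g₂ (Ioc a b))
    (i₃ : IntegrableOn g₃ (Ioi b)) :
    ∫ x, f x = (∫ x in Iic a, g₁ x) + (∫ x in a..b, g₂ x) + ∫ x in Ioi b, g₃ x := by
  have j₁ := i₁.congr_fun h₁.symm measurableSet_Iic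
  have j₂ := i₂.congr_fun h₂.symm measurableSet_Ioc
  have j₃ := i₃.congr_fun h₃.symm measurableSet_Ioi
  have hIic : IntegrableOn f (Iic b) := by
    rw [← Iic_union_Ioc_eq_Iic hab]; exact j₁.union j₂
  rw [← intervalIntegral.integral_Iic_add_Ioi hIic j₃, ← Iic_union_Ioc_eq_Iic hab,
    setIntegral_union (Iic_disjoint_Ioc le_rfl) measurableSet_Ioc j₁ j₂,
    intervalIntegral.integral_of_le hab, setIntegral_congr_fun measurableSet_Iic h₁,
    setIntegral_congr_fun measurableSet_Ioc h₂, setIntegral_congr_fun measurableSet_Ioi h₃]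

theorem integral_ite_lt_zero_mul (l r : ℝ) {g : ℝ → ℝ} (hg : Integrable g) :
    ∫ x, (if x < 0 then l else r) * g x = l * (∫ x in Iic 0, g x) + r * ∫ x in Ioi 0, g x := by
  have h₁ : EqOn (fun x => (if x < 0 then l else r) * g x) (fun x => l * g x) (Iio 0) :=
    fun x hx => by simp only [if_pos (mem_Iio.mp hx)]
  have h₂ : EqOn (fun x => (if x < 0 then l else r) * g x) (fun x => r * g x) (Ici 0) :=
    fun x hx => by simp only [if_neg (not_lt.mpr (mem_Ici.mp hx))]
  rw [← intervalIntegral.integral_Iio_add_Ici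
      ((hg.const_mul l).integrableOn.congr_fun h₁.symm measurableSet_Iio)
      ((hg.const_mul r).integrableOn.congr_fun h₂.symm measurableSet_Ici),
    setIntegral_congr_fun measurableSet_Iio h₁, setIntegral_congr_fun measurableSet_Ici h₂,
    integral_const_mul, integral_const_mul, setIntegral_congr_set Iio_ae_eq_Iic,
    setIntegral_congr_set Ioi_ae_eq_Ici.symm]

structure IsTestFunction (φ : ℝ → ℝ → ℝ) : Prop where
  contDiff : ContDiff ℝ 1 (uncurry φ)
  hasCompactSupport : HasCompactSupport (uncurry φ)

noncomputable def partialX (φ : ℝ → ℝ → ℝ) (x t : ℝ) : ℝ := deriv (fun y => φ y t) x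

noncomputable def partialT (φ : ℝ → ℝ → ℝ) (x t : ℝ) : ℝ := deriv (fun s => φ x s) t

noncomputable def weakFormIntegrand (φ : ℝ → ℝ → ℝ) (a b x t : ℝ) : ℝ :=
  a * partialT φ x t + b * partialX φ x t

namespace IsTestFunction

variable {φ : ℝ → ℝ → ℝ}

theorem differentiable (hφ : IsTestFunction φ) : Differentiable ℝ (uncurry φ) :=
  hφ.contDiff.differentiable one_ne_zero

theorem partialX_eq_fderiv (hφ : IsTestFunction φ) (x t : ℝ) :
    partialX φ x t = fderiv ℝ (uncurry φ) (x, t) (1, 0) := by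
  have h := (hφ.differentiable (x, t)).hasFDerivAt.comp_hasDerivAt x
    ((hasDerivAt_id' x).prodMk (hasDerivAt_const x t))
  exact h.deriv

theorem partialT_eq_fderiv (hφ : IsTestFunction φ) (x t : ℝ) :
    partialT φ x t = fderiv ℝ (uncurry φ) (x, t) (0, 1) := by
  have h := (hφ.differentiable (x, t)).hasFDerivAt.comp_hasDerivAt t
    ((hasDerivAt_const t x).prodMk (hasDerivAt_id' t))
  exact h.deriv

theorem hasDerivAt_partialX (hφ : IsTestFunction φ) (x t : ℝ) :
    HasDerivAt (fun y => φ y t) (partialX φ x t) x := by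
  rw [hφ.partialX_eq_fderiv]
  exact (hφ.differentiable (x, t)).hasFDerivAt.comp_hasDerivAt x
    ((hasDerivAt_id' x).prodMk (hasDerivAt_const x t))

theorem hasDerivAt_comp (hφ : IsTestFunction φ) {c : ℝ → ℝ × ℝ} {v : ℝ × ℝ} {τ : ℝ}
    (hc : HasDerivAt c v τ) :
    HasDerivAt (fun σ => φ (c σ).1 (c σ).2)
      (v.1 * partialX φ (c τ).1 (c τ).2 + v.2 * partialT φ (c τ).1 (c τ).2) τ := by
  have hv : v.1 * partialX φ (c τ).1 (c τ).2 + v.2 * partialT φ (c τ).1 (c τ).2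
      = fderiv ℝ (uncurry φ) (c τ) v := by
    rw [hφ.partialX_eq_fderiv, hφ.partialT_eq_fderiv, ← smul_eq_mul, ← smul_eq_mul,
      ← map_smul, ← map_smul, ← map_add]
    congr 1
    ext <;> simp
  rw [hv]
  exact (hφ.differentiable (c τ)).hasFDerivAt.comp_hasDerivAt τ hc

theorem hasDerivAt_comp_shear (hφ : IsTestFunction φ) (y s τ : ℝ) :
    HasDerivAt (fun τ => φ (y + s * τ) τ)
      (s * partialX φ (y + s * τ) τ + partialT φ (y + s * τ) τ) τ := by
  simpa using hφ.hasDerivAt_comp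
    ((((hasDerivAt_id τ).const_mul s).const_add y).prodMk (hasDerivAt_id τ))

theorem continuous (hφ : IsTestFunction φ) : Continuous (uncurry φ) :=
  hφ.contDiff.continuous

theorem continuous_partialX (hφ : IsTestFunction φ) : Continuous (uncurry (partialX φ)) := by
  have h : uncurry (partialX φ) = fun p => fderiv ℝ (uncurry φ) p (1, 0) :=
    funext fun p => hφ.partialX_eq_fderiv p.1 p.2
  rw [h]
  exact (hφ.contDiff.continuous_fderiv one_ne_zero).clm_apply continuous_const

theorem continuous_partialT (hφ : IsTestFunction φ) : Continuous (uncurry (partialT φ)) := by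
  have h : uncurry (partialT φ) = fun p => fderiv ℝ (uncurry φ) p (0, 1) :=
    funext fun p => hφ.partialT_eq_fderiv p.1 p.2
  rw [h]
  exact (hφ.contDiff.continuous_fderiv one_ne_zero).clm_apply continuous_const

theorem continuous_weakFormIntegrand (hφ : IsTestFunction φ) (a b : ℝ) :
    Continuous (uncurry (weakFormIntegrand φ a b)) :=
  (continuous_const.mul hφ.continuous_partialT).add (continuous_const.mul hφ.continuous_partialX)

theorem partialX_eq_zero (hφ : IsTestFunction φ) {x t : ℝ}
    (h : (x, t) ∉ tsupport (uncurry φ)) : partialX φ x t = 0 := by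
  rw [hφ.partialX_eq_fderiv, image_eq_zero_of_notMem_tsupport fun h' => h
    (tsupport_fderiv_subset ℝ h'), zero_apply]

theorem partialT_eq_zero (hφ : IsTestFunction φ) {x t : ℝ}
    (h : (x, t) ∉ tsupport (uncurry φ)) : partialT φ x t = 0 := by
  rw [hφ.partialT_eq_fderiv, image_eq_zero_of_notMem_tsupport fun h' => h
    (tsupport_fderiv_subset ℝ h'), zero_apply]

theorem hasCompactSupport_partialX (hφ : IsTestFunction φ) :
    HasCompactSupport (uncurry (partialX φ)) :=
  hφ.hasCompactSupport.mono' fun _ hp => by_contra fun h => hp (hφ.partialX_eq_zero h)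

theorem hasCompactSupport_partialT (hφ : IsTestFunction φ) :
    HasCompactSupport (uncurry (partialT φ)) :=
  hφ.hasCompactSupport.mono' fun _ hp => by_contra fun h => hp (hφ.partialT_eq_zero h)

theorem hasCompactSupport_weakFormIntegrand (hφ : IsTestFunction φ) (a b : ℝ) :
    HasCompactSupport (uncurry (weakFormIntegrand φ a b)) :=
  hφ.hasCompactSupport.mono' fun _ hp => by_contra fun h => hp <| by
    simp [uncurry, weakFormIntegrand, hφ.partialX_eq_zero h, hφ.partialT_eq_zero h]

theorem integral_Iic_partialX (hφ : IsTestFunction φ) (t b : ℝ) :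
    ∫ x in Iic b, partialX φ x t = φ b t :=
  (hφ.hasCompactSupport.comp_slice t).integral_Iic_deriv_eq (f := fun x => φ x t)
    (hφ.contDiff.comp (contDiff_id.prodMk contDiff_const)) b

theorem integral_Ioi_partialX (hφ : IsTestFunction φ) (t b : ℝ) :
    ∫ x in Ioi b, partialX φ x t = -φ b t :=
  (hφ.hasCompactSupport.comp_slice t).integral_Ioi_deriv_eq (f := fun x => φ x t)
    (hφ.contDiff.comp (contDiff_id.prodMk contDiff_const)) b

theorem integral_Ioi_deriv_comp_shear (hφ : IsTestFunction φ) (y s : ℝ) :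
    ∫ τ in Ioi 0, (s * partialX φ (y + s * τ) τ + partialT φ (y + s * τ) τ) = -φ y 0 := by
  calc ∫ τ in Ioi 0, (s * partialX φ (y + s * τ) τ + partialT φ (y + s * τ) τ)
      = ∫ τ in Ioi 0, deriv (fun τ => φ (y + s * τ) τ) τ := by
        congr 1 with τ
        exact (hφ.hasDerivAt_comp_shear y s τ).deriv.symm
    _ = -φ (y + s * 0) 0 :=
        (hφ.hasCompactSupport.comp_line y s).integral_Ioi_deriv_eq
          (f := fun τ => φ (y + s * τ) τ)
          (hφ.contDiff.comp ((contDiff_const.add (contDiff_const.mul contDiff_id)).prodMk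
            contDiff_id)) 0
    _ = -φ y 0 := by rw [mul_zero, add_zero]

theorem integral_Ioi_deriv_mul_comp_ray (hφ : IsTestFunction φ) (ξ : ℝ) :
    ∫ τ in Ioi 0, (φ (ξ * τ) τ + τ * (ξ * partialX φ (ξ * τ) τ + partialT φ (ξ * τ) τ)) = 0 := by
  have hray : HasCompactSupport fun τ => φ (ξ * τ) τ := by
    simpa using hφ.hasCompactSupport.comp_line 0 ξ
  calc ∫ τ in Ioi 0, (φ (ξ * τ) τ + τ * (ξ * partialX φ (ξ * τ) τ + partialT φ (ξ * τ) τ))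
      = ∫ τ in Ioi 0, deriv (fun τ => τ * φ (ξ * τ) τ) τ := by
        congr 1 with τ
        refine (HasDerivAt.deriv ?_).symm
        simpa using (hasDerivAt_id' τ).fun_mul (hφ.hasDerivAt_comp_shear 0 ξ τ)
    _ = -(0 * φ (ξ * 0) 0) :=
        (hray.mul_left (f := id)).integral_Ioi_deriv_eq (f := fun τ => τ * φ (ξ * τ) τ)
          (contDiff_id.mul
            (hφ.contDiff.comp ((contDiff_const.mul contDiff_id).prodMk contDiff_id))) 0
    _ = 0 := by rw [zero_mul, neg_zero]

theorem integral_Ioi_integral_weakFormIntegrand_shear (hφ : IsTestFunction φ) (a b s : ℝ)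
    (T : Set ℝ) :
    ∫ t in Ioi 0, ∫ y in T, weakFormIntegrand φ a b (y + s * t) t
      = -(a * ∫ y in T, φ y 0)
        + (b - s * a) * ∫ t in Ioi 0, ∫ y in T, partialX φ (y + s * t) t := by
  have hX := hφ.continuous_partialX.integrable_prod_restrict_comp_shear
    hφ.hasCompactSupport_partialX s (Ioi 0) T
  have hline : ∀ y, ∫ t in Ioi 0, weakFormIntegrand φ a b (y + s * t) t
      = -(a * φ y 0) + (b - s * a) * ∫ t in Ioi 0, partialX φ (y + s * t) t := by
    intro y
    have iX := hφ.continuous_partialX.integrable_line hφ.hasCompactSupport_partialX y s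
    have iT := hφ.continuous_partialT.integrable_line hφ.hasCompactSupport_partialT y s
    calc ∫ t in Ioi 0, weakFormIntegrand φ a b (y + s * t) t
        = ∫ t in Ioi 0, (a * (s * partialX φ (y + s * t) t + partialT φ (y + s * t) t)
            + (b - s * a) * partialX φ (y + s * t) t) := by
          congr 1 with t
          simp only [weakFormIntegrand]
          ring
      _ = _ := by
          rw [integral_add ?_ ?_, integral_const_mul, integral_const_mul,
            hφ.integral_Ioi_deriv_comp_shear, mul_neg]
          · exact ((iX.const_mul s).fun_add iT |>.const_mul a).integrableOn
          · exact (iX.const_mul _).integrableOn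
  rw [integral_integral_swap (f := fun t y => weakFormIntegrand φ a b (y + s * t) t)
      ((hφ.continuous_weakFormIntegrand a b).integrable_prod_restrict_comp_shear
        (hφ.hasCompactSupport_weakFormIntegrand a b) s _ _)]
  simp_rw [hline]
  rw [integral_add ?_ ?_, integral_neg, integral_const_mul, integral_const_mul,
    integral_integral_swap (f := fun t y => partialX φ (y + s * t) t) hX]
  · exact ((hφ.continuous.integrable_slice hφ.hasCompactSupport 0).integrableOn.const_mul a).neg
  · exact hX.integral_prod_right.const_mul _

theorem integral_Ioi_integral_Iic_weakFormIntegrand (hφ : IsTestFunction φ) (a b s : ℝ) :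
    ∫ t in Ioi 0, ∫ x in Iic (s * t), weakFormIntegrand φ a b x t
      = -(a * ∫ x in Iic 0, φ x 0) + (b - s * a) * ∫ t in Ioi 0, φ (s * t) t := by
  have hX : ∀ t, ∫ y in Iic 0, partialX φ (y + s * t) t = φ (s * t) t := fun t => by
    rw [← setIntegral_Iic_eq_comp_add (partialX φ · t), hφ.integral_Iic_partialX]
  simp_rw [setIntegral_Iic_eq_comp_add (weakFormIntegrand φ a b · _),
    integral_Ioi_integral_weakFormIntegrand_shear hφ, hX]

theorem integral_Ioi_integral_Ioi_weakFormIntegrand (hφ : IsTestFunction φ) (a b s : ℝ) :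
    ∫ t in Ioi 0, ∫ x in Ioi (s * t), weakFormIntegrand φ a b x t
      = -(a * ∫ x in Ioi 0, φ x 0) - (b - s * a) * ∫ t in Ioi 0, φ (s * t) t := by
  have hX : ∀ t, ∫ y in Ioi 0, partialX φ (y + s * t) t = -φ (s * t) t := fun t => by
    rw [← setIntegral_Ioi_eq_comp_add (partialX φ · t), hφ.integral_Ioi_partialX]
  simp_rw [setIntegral_Ioi_eq_comp_add (weakFormIntegrand φ a b · _),
    integral_Ioi_integral_weakFormIntegrand_shear hφ, hX, integral_neg]
  ring

theorem integrableOn_integral_Iic_weakFormIntegrand (hφ : IsTestFunction φ) (a b s : ℝ) :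
    IntegrableOn (fun t => ∫ x in Iic (s * t), weakFormIntegrand φ a b x t) (Ioi 0) := by
  simp_rw [setIntegral_Iic_eq_comp_add (weakFormIntegrand φ a b · _)]
  exact ((hφ.continuous_weakFormIntegrand a b).integrable_prod_restrict_comp_shear
    (hφ.hasCompactSupport_weakFormIntegrand a b) s (Ioi 0) (Iic 0)).integral_prod_left

theorem integrableOn_integral_Ioi_weakFormIntegrand (hφ : IsTestFunction φ) (a b s : ℝ) :
    IntegrableOn (fun t => ∫ x in Ioi (s * t), weakFormIntegrand φ a b x t) (Ioi 0) := by
  simp_rw [setIntegral_Ioi_eq_comp_add (weakFormIntegrand φ a b · _)]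
  exact ((hφ.continuous_weakFormIntegrand a b).integrable_prod_restrict_comp_shear
    (hφ.hasCompactSupport_weakFormIntegrand a b) s (Ioi 0) (Ioi 0)).integral_prod_left

theorem integrable_comp_ray (hφ : IsTestFunction φ) (s : ℝ) :
    Integrable fun t => φ (s * t) t := by
  simpa using hφ.continuous.integrable_line hφ.hasCompactSupport 0 s

section Fan

variable {v w : ℝ → ℝ} {s₁ s₂ : ℝ}

/-- In ray coordinates `x = ξ t`, `t (v φ_t + w φ_x) = v ∂_t (t φ) + ∂_ξ ((w - ξ v) φ)`. -/
theorem intervalIntegral_weakFormIntegrand_fan (hφ : IsTestFunction φ) (hv : Continuous v)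
    (hw : Continuous w) (hs : s₁ ≤ s₂)
    (hvw : ∀ ξ ∈ Ioo s₁ s₂, HasDerivAt (fun η => w η - η * v η) (-v ξ) ξ)
    {t : ℝ} (ht : 0 < t) :
    ∫ x in s₁ * t..s₂ * t, weakFormIntegrand φ (v (x / t)) (w (x / t)) x t
      = (∫ ξ in s₁..s₂, v ξ * (φ (ξ * t) t
          + t * (ξ * partialX φ (ξ * t) t + partialT φ (ξ * t) t)))
        + ((w s₂ - s₂ * v s₂) * φ (s₂ * t) t - (w s₁ - s₁ * v s₁) * φ (s₁ * t) t) := by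
  have hray : ∀ ξ, HasDerivAt (fun η => φ (η * t) t) (t * partialX φ (ξ * t) t) ξ := by
    intro ξ
    have h := (hφ.hasDerivAt_partialX (ξ * t) t).comp ξ (hasDerivAt_mul_const t)
    exact h.congr_deriv (mul_comm _ _)
  have c : Continuous fun ξ : ℝ => (ξ * t, t) := by fun_prop
  have cφ : Continuous fun ξ => φ (ξ * t) t := hφ.continuous.comp c
  have cX : Continuous fun ξ => partialX φ (ξ * t) t := hφ.continuous_partialX.comp c
  have cT : Continuous fun ξ => partialT φ (ξ * t) t := hφ.continuous_partialT.comp c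
  have cF : Continuous fun ξ => w ξ - ξ * v ξ := hw.sub (continuous_id.mul hv)
  have hFTC :
      ∫ ξ in s₁..s₂, (-v ξ * φ (ξ * t) t + (w ξ - ξ * v ξ) * (t * partialX φ (ξ * t) t))
      = (w s₂ - s₂ * v s₂) * φ (s₂ * t) t - (w s₁ - s₁ * v s₁) * φ (s₁ * t) t :=
    intervalIntegral.integral_eq_sub_of_hasDeriv_right_of_le hs (cF.mul cφ).continuousOn
      (fun ξ hξ => ((hvw ξ hξ).fun_mul (hray ξ)).hasDerivWithinAt)
      (((hv.neg.mul cφ).add (cF.mul (continuous_const.mul cX))).intervalIntegrable _ _)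
  have hscale := intervalIntegral.integral_comp_mul_right (a := s₁) (b := s₂)
    (fun x => weakFormIntegrand φ (v (x / t)) (w (x / t)) x t) ht.ne'
  rw [eq_inv_smul_iff₀ ht.ne', smul_eq_mul, ← intervalIntegral.integral_const_mul] at hscale
  rw [← hscale, ← hFTC, ← intervalIntegral.integral_add ?_ ?_]
  · refine intervalIntegral.integral_congr fun ξ _ => ?_
    simp only [weakFormIntegrand, mul_div_cancel_right₀ _ ht.ne']
    ring
  · exact (hv.mul (cφ.add (continuous_const.mul ((continuous_id.mul cX).add cT))))
      |>.intervalIntegrable _ _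
  · exact ((hv.neg.mul cφ).add (cF.mul (continuous_const.mul cX))).intervalIntegrable _ _

theorem integrable_prod_fan (hφ : IsTestFunction φ) (hv : Continuous v) (s₁ s₂ : ℝ) :
    Integrable (fun q : ℝ × ℝ => v q.2 * (φ (q.2 * q.1) q.1
        + q.1 * (q.2 * partialX φ (q.2 * q.1) q.1 + partialT φ (q.2 * q.1) q.1)))
      ((volume.restrict (Ioi 0)).prod (volume.restrict (Ioc s₁ s₂))) := by
  have c : Continuous fun q : ℝ × ℝ => (q.2 * q.1, q.1) := by fun_prop
  refine Continuous.integrable_prod_restrict_of_eq_zero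
    (K := (Prod.snd '' tsupport (uncurry φ)) ×ˢ Icc s₁ s₂)
    ((hv.comp continuous_snd).mul ((hφ.continuous.comp c).add (continuous_fst.mul
      ((continuous_snd.mul (hφ.continuous_partialX.comp c)).add
        (hφ.continuous_partialT.comp c)))))
    ((IsCompact.image hφ.hasCompactSupport continuous_snd).prod isCompact_Icc)
    measurableSet_Ioi measurableSet_Ioc fun q hq hK => ?_
  have h : (q.2 * q.1, q.1) ∉ tsupport (uncurry φ) := fun h =>
    hK ⟨⟨_, h, rfl⟩, Ioc_subset_Icc_self hq.2⟩
  have h0 : φ (q.2 * q.1) q.1 = 0 := image_eq_zero_of_notMem_tsupport (f := uncurry φ) h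
  simp [h0, hφ.partialX_eq_zero h, hφ.partialT_eq_zero h]

theorem integrableOn_intervalIntegral_weakFormIntegrand_fan (hφ : IsTestFunction φ)
    (hv : Continuous v) (hw : Continuous w) (hs : s₁ ≤ s₂)
    (hvw : ∀ ξ ∈ Ioo s₁ s₂, HasDerivAt (fun η => w η - η * v η) (-v ξ) ξ) :
    IntegrableOn
      (fun t => ∫ x in s₁ * t..s₂ * t, weakFormIntegrand φ (v (x / t)) (w (x / t)) x t)
      (Ioi 0) := by
  refine IntegrableOn.congr_fun ?_
    (fun t ht => (hφ.intervalIntegral_weakFormIntegrand_fan hv hw hs hvw ht).symm)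
    measurableSet_Ioi
  simp_rw [intervalIntegral.integral_of_le hs]
  exact ((hφ.integrable_prod_fan hv s₁ s₂).integral_prod_left.fun_add
    (((hφ.integrable_comp_ray s₂).const_mul _).sub'
      ((hφ.integrable_comp_ray s₁).const_mul _)).integrableOn)

theorem integral_Ioi_intervalIntegral_weakFormIntegrand_fan (hφ : IsTestFunction φ)
    (hv : Continuous v) (hw : Continuous w) (hs : s₁ ≤ s₂)
    (hvw : ∀ ξ ∈ Ioo s₁ s₂, HasDerivAt (fun η => w η - η * v η) (-v ξ) ξ) :
    ∫ t in Ioi 0, ∫ x in s₁ * t..s₂ * t, weakFormIntegrand φ (v (x / t)) (w (x / t)) x t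
      = (w s₂ - s₂ * v s₂) * (∫ t in Ioi 0, φ (s₂ * t) t)
        - (w s₁ - s₁ * v s₁) * ∫ t in Ioi 0, φ (s₁ * t) t := by
  rw [setIntegral_congr_fun measurableSet_Ioi
    fun t ht => hφ.intervalIntegral_weakFormIntegrand_fan hv hw hs hvw ht]
  simp_rw [intervalIntegral.integral_of_le hs]
  rw [integral_add (hφ.integrable_prod_fan hv s₁ s₂).integral_prod_left
      (((hφ.integrable_comp_ray s₂).const_mul _).sub'
        ((hφ.integrable_comp_ray s₁).const_mul _)).integrableOn,
    integral_integral_swap (hφ.integrable_prod_fan hv s₁ s₂), integral_sub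
      ((hφ.integrable_comp_ray s₂).const_mul _).integrableOn
      ((hφ.integrable_comp_ray s₁).const_mul _).integrableOn]
  simp_rw [integral_const_mul, hφ.integral_Ioi_deriv_mul_comp_ray, mul_zero, integral_zero,
    zero_add]

end Fan

theorem integral_weakFormIntegrand_fan_profile (hφ : IsTestFunction φ) (f : ℝ → ℝ)
    {v : ℝ → ℝ} (hv : Continuous v) (hfv : Continuous fun ξ => f (v ξ)) {l r s₁ s₂ : ℝ}
    (hs : s₁ ≤ s₂) {u : ℝ → ℝ → ℝ}
    (hu : ∀ x t, 0 < t →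
      u x t = if x ≤ s₁ * t then l else if x ≤ s₂ * t then v (x / t) else r)
    {t : ℝ} (ht : 0 < t) :
    ∫ x, weakFormIntegrand φ (u x t) (f (u x t)) x t
      = (∫ x in Iic (s₁ * t), weakFormIntegrand φ l (f l) x t)
        + (∫ x in s₁ * t..s₂ * t, weakFormIntegrand φ (v (x / t)) (f (v (x / t))) x t)
        + ∫ x in Ioi (s₂ * t), weakFormIntegrand φ r (f r) x t := by
  have hst : s₁ * t ≤ s₂ * t := mul_le_mul_of_nonneg_right hs ht.le
  have c : Continuous fun x : ℝ => (x, t) := by fun_prop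
  refine integral_eq_Iic_add_intervalIntegral_add_Ioi hst (fun x hx => ?_) (fun x hx => ?_)
    (fun x hx => ?_) ?_ ?_ ?_
  · simp only [hu x t ht, if_pos (mem_Iic.mp hx)]
  · simp only [hu x t ht, if_neg (not_le.mpr hx.1), if_pos hx.2]
  · simp only [hu x t ht, if_neg (not_le.mpr (hst.trans_lt hx)),
      if_neg (not_le.mpr (mem_Ioi.mp hx))]
  · exact ((hφ.continuous_weakFormIntegrand _ _).integrable_slice
      (hφ.hasCompactSupport_weakFormIntegrand _ _) t).integrableOn
  · exact (((hv.comp (continuous_id.div_const t)).mul (hφ.continuous_partialT.comp c)).add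
      ((hfv.comp (continuous_id.div_const t)).mul (hφ.continuous_partialX.comp c)))
      |>.integrableOn_Ioc
  · exact ((hφ.continuous_weakFormIntegrand _ _).integrable_slice
      (hφ.hasCompactSupport_weakFormIntegrand _ _) t).integrableOn

theorem weakForm_eq_zero_of_fan_profile (hφ : IsTestFunction φ) (f : ℝ → ℝ) {v : ℝ → ℝ}
    (hv : Continuous v) (hfv : Continuous fun ξ => f (v ξ)) {l r s₁ s₂ : ℝ} (hs : s₁ ≤ s₂)
    (hfan : ∀ ξ ∈ Ioo s₁ s₂, HasDerivAt (fun η => f (v η) - η * v η) (-v ξ) ξ)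
    (hjump₁ : f (v s₁) - s₁ * v s₁ = f l - s₁ * l)
    (hjump₂ : f (v s₂) - s₂ * v s₂ = f r - s₂ * r)
    {u₀ : ℝ → ℝ} (hu₀ : ∀ x, u₀ x = if x < 0 then l else r) {u : ℝ → ℝ → ℝ}
    (hu : ∀ x t, 0 < t →
      u x t = if x ≤ s₁ * t then l else if x ≤ s₂ * t then v (x / t) else r) :
    (∫ t in Ioi 0, ∫ x, weakFormIntegrand φ (u x t) (f (u x t)) x t)
      + ∫ x, u₀ x * φ x 0 = 0 := by
  have iL := hφ.integrableOn_integral_Iic_weakFormIntegrand l (f l) s₁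
  have iF := hφ.integrableOn_intervalIntegral_weakFormIntegrand_fan hv hfv hs hfan
  have iR := hφ.integrableOn_integral_Ioi_weakFormIntegrand r (f r) s₂
  rw [setIntegral_congr_fun measurableSet_Ioi
      fun t ht => hφ.integral_weakFormIntegrand_fan_profile f hv hfv hs hu ht,
    integral_add (iL.fun_add iF) iR, integral_add iL iF,
    hφ.integral_Ioi_integral_Iic_weakFormIntegrand,
    hφ.integral_Ioi_intervalIntegral_weakFormIntegrand_fan hv hfv hs hfan,
    hφ.integral_Ioi_integral_Ioi_weakFormIntegrand]
  simp only [hu₀]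
  rw [integral_ite_lt_zero_mul l r (g := fun x => φ x 0)
    (hφ.continuous.integrable_slice hφ.hasCompactSupport 0)]
  linear_combination (-∫ t in Ioi 0, φ (s₁ * t) t) * hjump₁
    + (∫ t in Ioi 0, φ (s₂ * t) t) * hjump₂

end IsTestFunction

/-- `hf` says that the characteristic speed `f'(v ξ)` equals `ξ`: `v` is a centred rarefaction. -/
theorem hasDerivAt_comp_sub_mul_of_hasDerivAt {f v : ℝ → ℝ} {ξ : ℝ} (hf : HasDerivAt f ξ (v ξ))
    (hv : DifferentiableAt ℝ v ξ) : HasDerivAt (fun η => f (v η) - η * v η) (-v ξ) ξ :=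
  ((hf.comp ξ hv.hasDerivAt).fun_sub ((hasDerivAt_id' ξ).fun_mul hv.hasDerivAt)).congr_deriv
    (by ring)

noncomputable def depHInv (ξ : ℝ) : ℝ := 1 / 2 + Real.sqrt ((1 - ξ) / 12)

theorem depH_depHInv {ξ : ℝ} (hξ : ξ ≤ 1) : depH (depHInv ξ) = ξ := by
  rw [depH, depHInv, add_sub_cancel_left, Real.sq_sqrt (by linarith)]
  ring

theorem depHInv_depH {a : ℝ} (ha : 1 / 2 ≤ a) : depHInv (depH a) = a := by
  rw [depHInv, depH, show (1 - (1 - 12 * (a - 1 / 2) ^ 2)) / 12 = (a - 1 / 2) ^ 2 by ring,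
    Real.sqrt_sq (by linarith)]
  ring

theorem continuous_depHInv : Continuous depHInv := by
  unfold depHInv
  fun_prop

theorem differentiableAt_depHInv {ξ : ℝ} (hξ : ξ < 1) : DifferentiableAt ℝ depHInv ξ :=
  (differentiableAt_const _).add
    (((differentiableAt_const _).sub differentiableAt_id).div_const 12 |>.sqrt
      (div_ne_zero (sub_ne_zero.mpr hξ.ne') (by norm_num)))

theorem continuous_depG : Continuous depG := by
  unfold depG
  fun_prop

theorem hasDerivAt_depG (u : ℝ) : HasDerivAt depG (depH u) u := by
  have h := (((hasDerivAt_id' u).const_mul 2).fun_mul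
    ((hasDerivAt_const u 1).fun_sub (hasDerivAt_id' u))).fun_mul
    (((hasDerivAt_id' u).const_mul 2).fun_sub (hasDerivAt_const u 1))
  exact h.congr_deriv (by rw [depH]; ring)

theorem depH_le_depH {a b : ℝ} (ha : 1 / 2 ≤ a) (hab : a ≤ b) : depH b ≤ depH a := by
  unfold depH
  nlinarith

theorem depH_le_one (a : ℝ) : depH a ≤ 1 := by
  unfold depH
  nlinarith [sq_nonneg (a - 1 / 2)]

/-- Rankine–Hugoniot: the jump from `ρ* = 3/4 - ρ/2` down to `ρ` travels at speed `H(ρ*)`. -/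
theorem depG_sub_depH_mul (ρ : ℝ) :
    depG (3 / 4 - ρ / 2) - depH (3 / 4 - ρ / 2) * (3 / 4 - ρ / 2)
      = depG ρ - depH (3 / 4 - ρ / 2) * ρ := by
  unfold depG depH
  ring

theorem dep_rarefaction_shock_is_weak_solution_general
    (ρ l : ℝ) (hρ : ρ ∈ Set.Icc (0 : ℝ) (1 / 2)) (hlρ : 3 / 4 - ρ / 2 < l)
    (ρstar : ℝ) (hρstar : ρstar = 3 / 4 - ρ / 2)
    (u₀ : ℝ → ℝ) (hu₀ : ∀ x : ℝ, u₀ x = if x < 0 then l else ρ)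
    (u : ℝ → ℝ → ℝ)
    (hu : ∀ x t : ℝ, 0 < t → u x t =
      if x ≤ depH l * t then l
      else if x ≤ depH ρstar * t then 1 / 2 + Real.sqrt ((1 - x / t) / 12)
      else ρ)
    (φ : ℝ → ℝ → ℝ)
    (hφ : ContDiff ℝ 1 (fun p : ℝ × ℝ => φ p.1 p.2))
    (hφsupp : HasCompactSupport (fun p : ℝ × ℝ => φ p.1 p.2)) :
    (∫ t in Set.Ioi (0 : ℝ), ∫ x : ℝ,
        (u x t * deriv (fun s => φ x s) t
          + depG (u x t) * deriv (fun y => φ y t) x))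
      + (∫ x : ℝ, u₀ x * φ x 0) = 0 := by
  subst hρstar
  have hρstar : 1 / 2 ≤ 3 / 4 - ρ / 2 := by linarith [hρ.2]
  exact IsTestFunction.weakForm_eq_zero_of_fan_profile ⟨hφ, hφsupp⟩ depG continuous_depHInv
    (continuous_depG.comp continuous_depHInv) (depH_le_depH hρstar hlρ.le)
    (fun ξ hξ => hasDerivAt_comp_sub_mul_of_hasDerivAt
      (by simpa only [depH_depHInv (hξ.2.le.trans (depH_le_one _))] using
        hasDerivAt_depG (depHInv ξ))
      (differentiableAt_depHInv (hξ.2.trans_le (depH_le_one _))))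
    (by rw [depHInv_depH (hρstar.trans hlρ.le)]) (by rw [depHInv_depH hρstar, depG_sub_depH_mul])
    hu₀ hu

/-- The mixed rarefaction–shock (contact-discontinuity) profile is a weak solution of
the conservation law `∂_t u + ∂_x G(u) = 0` with Riemann initial datum
`u₀ = λ·1_{x<0} + ρ·1_{x≥0}`, for `ρ ∈ [0, 1/2]` and `λ ∈ (3/4 - ρ/2, 1]`, where
`ρ* = 3/4 - ρ/2`. -/
theorem dep_rarefaction_shock_is_weak_solution
    (ρ l : ℝ) (hρ : ρ ∈ Set.Icc (0 : ℝ) (1 / 2)) (hlρ : 3 / 4 - ρ / 2 < l) (hl : l ≤ 1)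
    (ρstar : ℝ) (hρstar : ρstar = 3 / 4 - ρ / 2)
    (u₀ : ℝ → ℝ) (hu₀ : ∀ x : ℝ, u₀ x = if x < 0 then l else ρ)
    (u : ℝ → ℝ → ℝ)
    (hu0 : ∀ x : ℝ, u x 0 = u₀ x)
    (hu : ∀ x t : ℝ, 0 < t → u x t =
      if x ≤ depH l * t then l
      else if x ≤ depH ρstar * t then 1 / 2 + Real.sqrt ((1 - x / t) / 12)
      else ρ)
    (φ : ℝ → ℝ → ℝ)
    (hφ : ContDiff ℝ 1 (fun p : ℝ × ℝ => φ p.1 p.2))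
    (hφsupp : HasCompactSupport (fun p : ℝ × ℝ => φ p.1 p.2)) :
    (∫ t in Set.Ioi (0 : ℝ), ∫ x : ℝ,
        (u x t * deriv (fun s => φ x s) t
          + depG (u x t) * deriv (fun y => φ y t) x))
      + (∫ x : ℝ, u₀ x * φ x 0) = 0 :=
  dep_rarefaction_shock_is_weak_solution_general ρ l hρ hlρ ρstar hρstar u₀ hu₀ u hu φ hφ hφsupp
end
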